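/- If a double rotation T is of finite type, i.e., Ω_N = Ω_{N+1} for some N, then the attractor Ω = Ω_N is a nonempty finite union of half-open intervals and T restricted to Ω maps Ω bijectively onto Ω. -/

import Mathlib

/-!
Each `T^[n] '' [0,1)` is a finite union of half-open intervals, because the two rotations
`y ↦ fract (y + γ)` are translations on two subintervals of `[0,1)`. Once `Ω N = Ω (N+1)`,
the set `Ω N` is a fixed point of `S ↦ T '' S`, so the sequence is eventually constant and
`T` maps `Ω N` onto itself. The two branches of `T` preserve Lebesgue measure, so the images
of `Ω N ∩ [0,c)` and `Ω N ∩ [c,1)`, whose union `Ω N` has measure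
`vol (Ω N ∩ [0,c)) + vol (Ω N ∩ [c,1))`, overlap in a null set; being a finite union of
half-open intervals, that overlap is empty, and `T` is injective on `Ω N`.
-/

open MeasureTheory Set Function

section Iterate

variable {X : Type*} {f : X → X} {s : Set X}

theorem Set.MapsTo.antitone_image_iterate (h : MapsTo f s s) :
    Antitone fun n => f^[n] '' s :=
  antitone_nat_of_succ_le fun n => by
    rw [iterate_succ, image_comp]
    exact image_mono h.image_subset

theorem Set.MapsTo.biInter_range_succ_image_iterate (h : MapsTo f s s) (n : ℕ) :
    ⋂ k ∈ Finset.range (n + 1), f^[k] '' s = f^[n] '' s :=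
  (biInter_subset_of_mem (Finset.self_mem_range_succ n)).antisymm
    (subset_iInter₂ fun _ hk => h.antitone_image_iterate (Finset.mem_range_succ_iff.mp hk))

theorem Function.IsFixedPt.image_iterate_eq_of_le {N n : ℕ}
    (hfix : IsFixedPt (image f) (f^[N] '' s)) (hn : N ≤ n) : f^[n] '' s = f^[N] '' s := by
  obtain ⟨m, rfl⟩ := Nat.exists_eq_add_of_le hn
  rw [add_comm, iterate_add, image_comp]
  exact hfix.image_iterate m

theorem Set.MapsTo.iInter_image_iterate_eq (h : MapsTo f s s) {N : ℕ}
    (hfix : IsFixedPt (image f) (f^[N] '' s)) : ⋂ n, f^[n] '' s = f^[N] '' s :=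
  (iInter_subset _ N).antisymm <| subset_iInter fun n =>
    (hfix.image_iterate_eq_of_le (le_max_left N n)).symm.subset.trans
      (h.antitone_image_iterate (le_max_right N n))

end Iterate

theorem MeasureTheory.measure_image_inter_image_eq_zero {X Y : Type*} [MeasurableSpace X]
    [MeasurableSpace Y] {μ : Measure X} {ν : Measure Y} {f : X → Y} {A B : Set X}
    (hAB : Disjoint A B) (hB : MeasurableSet B) (hfB : MeasurableSet (f '' B))
    (hA_eq : ν (f '' A) = μ A) (hB_eq : ν (f '' B) = μ B)
    (hAB_eq : ν (f '' (A ∪ B)) = μ (A ∪ B)) (hfin : μ (A ∪ B) ≠ ⊤) :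
    ν (f '' A ∩ f '' B) = 0 := by
  have h := measure_union_add_inter (μ := ν) (f '' A) hfB
  rw [← image_union, hAB_eq, hA_eq, hB_eq, ← measure_union hAB hB] at h
  exact (ENNReal.add_right_inj hfin).mp (by rwa [add_zero])

theorem Set.inter_Ico_union_inter_Ico {a b c : ℝ} {S : Set ℝ} (hS : S ⊆ Ico a b)
    (hac : a ≤ c) (hcb : c ≤ b) : S ∩ Ico a c ∪ S ∩ Ico c b = S := by
  rw [← inter_union_distrib_left, Ico_union_Ico_eq_Ico hac hcb, inter_eq_left.mpr hS]

def IsFiniteUnionIco (S : Set ℝ) : Prop :=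
  ∃ s : Finset (ℝ × ℝ), S = ⋃ p ∈ s, Ico p.1 p.2

theorem isFiniteUnionIco_Ico (a b : ℝ) : IsFiniteUnionIco (Ico a b) :=
  ⟨{(a, b)}, by simp⟩

namespace IsFiniteUnionIco

variable {S S' : Set ℝ}

theorem union (h : IsFiniteUnionIco S) (h' : IsFiniteUnionIco S') :
    IsFiniteUnionIco (S ∪ S') := by
  obtain ⟨s, rfl⟩ := h
  obtain ⟨t, rfl⟩ := h'
  exact ⟨s ∪ t, by rw [Finset.set_biUnion_union]⟩

theorem inter_Ico (h : IsFiniteUnionIco S) (a b : ℝ) :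
    IsFiniteUnionIco (S ∩ Ico a b) := by
  obtain ⟨s, rfl⟩ := h
  refine ⟨s.image fun p => (max p.1 a, min p.2 b), ?_⟩
  simp only [Finset.set_biUnion_finset_image, iUnion₂_inter, Ico_inter_Ico]

theorem inter (h : IsFiniteUnionIco S) (h' : IsFiniteUnionIco S') :
    IsFiniteUnionIco (S ∩ S') := by
  classical
  obtain ⟨t, rfl⟩ := h'
  induction t using Finset.induction with
  | empty => exact ⟨∅, by simp⟩
  | insert p t _ ih =>
    rw [Finset.set_biUnion_insert, inter_union_distrib_left]
    exact (h.inter_Ico _ _).union ih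

theorem image_add_const (h : IsFiniteUnionIco S) (t : ℝ) :
    IsFiniteUnionIco ((· + t) '' S) := by
  obtain ⟨s, rfl⟩ := h
  refine ⟨s.image fun p => (p.1 + t, p.2 + t), ?_⟩
  simp only [image_iUnion₂, image_add_const_Ico, Finset.set_biUnion_finset_image]

theorem measurableSet (h : IsFiniteUnionIco S) : MeasurableSet S := by
  obtain ⟨s, rfl⟩ := h
  exact s.measurableSet_biUnion fun _ _ => measurableSet_Ico

theorem eq_empty_of_volume_eq_zero (h : IsFiniteUnionIco S) (h0 : volume S = 0) :
    S = ∅ := by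
  obtain ⟨s, rfl⟩ := h
  refine eq_empty_iff_forall_notMem.mpr fun x hx => ?_
  obtain ⟨p, hp, hxp⟩ := mem_iUnion₂.mp hx
  have hp0 : volume (Ico p.1 p.2) = 0 := measure_mono_null
    (subset_biUnion_of_mem (u := fun p : ℝ × ℝ => Ico p.1 p.2) hp) h0
  rw [Real.volume_Ico, ENNReal.ofReal_eq_zero] at hp0
  linarith [hxp.1, hxp.2]

end IsFiniteUnionIco

section Rotation

variable {γ : ℝ} {A : Set ℝ}

theorem image_fract_add_eq (hγ : γ ∈ Icc (0 : ℝ) 1) (hA : A ⊆ Ico 0 1) :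
    (fun x => Int.fract (x + γ)) '' A =
      (· + γ) '' (A ∩ Ico 0 (1 - γ)) ∪ (· + (γ - 1)) '' (A ∩ Ico (1 - γ) 1) := by
  conv_lhs =>
    rw [← inter_Ico_union_inter_Ico (c := 1 - γ) hA (by linarith [hγ.2]) (by linarith [hγ.1])]
  rw [image_union]
  congr 1 <;> refine image_congr fun x hx => ?_
  · exact Int.fract_eq_self.mpr ⟨by linarith [hx.2.1, hγ.1], by linarith [hx.2.2]⟩
  · rw [← Int.fract_sub_one, add_sub_assoc]
    exact Int.fract_eq_self.mpr ⟨by linarith [hx.2.1], by linarith [hx.2.2, hγ.2]⟩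

theorem injOn_fract_add (γ : ℝ) : InjOn (fun x => Int.fract (x + γ)) (Ico 0 1) := by
  intro x hx y hy hxy
  obtain ⟨z, hz⟩ := Int.fract_eq_fract.mp hxy
  have hz0 : z = 0 := by
    have h1 : (z : ℝ) < 1 := by linarith [hx.2, hy.1]
    have h2 : (-1 : ℝ) < z := by linarith [hx.1, hy.2]
    norm_cast at h1 h2
    omega
  simp only [hz0, Int.cast_zero] at hz
  linarith

theorem volume_image_fract_add (hγ : γ ∈ Icc (0 : ℝ) 1) (hA : A ⊆ Ico 0 1)
    (hAm : MeasurableSet A) : volume ((fun x => Int.fract (x + γ)) '' A) = volume A := by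
  have hdisj : Disjoint ((· + γ) '' (A ∩ Ico 0 (1 - γ)))
      ((· + (γ - 1)) '' (A ∩ Ico (1 - γ) 1)) := by
    refine disjoint_left.mpr ?_
    rintro _ ⟨x, ⟨-, hx, -⟩, rfl⟩ ⟨y, ⟨-, -, hy⟩, hxy⟩
    linarith [hx, hy, show y + (γ - 1) = x + γ from hxy]
  have hm : MeasurableSet ((· + (γ - 1)) '' (A ∩ Ico (1 - γ) 1)) := by
    rw [image_add_right]
    exact (hAm.inter measurableSet_Ico).preimage (measurable_add_const _)
  rw [image_fract_add_eq hγ hA, measure_union hdisj hm, image_add_right, image_add_right,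
    measure_preimage_add_right, measure_preimage_add_right,
    ← measure_union (disjoint_left.mpr fun _ h h' => (not_lt.mpr h'.2.1) h.2.2)
      (hAm.inter measurableSet_Ico),
    inter_Ico_union_inter_Ico hA (by linarith [hγ.2]) (by linarith [hγ.1])]

theorem IsFiniteUnionIco.image_fract_add (hγ : γ ∈ Icc (0 : ℝ) 1) (hA : A ⊆ Ico 0 1)
    (h : IsFiniteUnionIco A) : IsFiniteUnionIco ((fun x => Int.fract (x + γ)) '' A) := by
  rw [image_fract_add_eq hγ hA]
  exact ((h.inter_Ico _ _).image_add_const _).union ((h.inter_Ico _ _).image_add_const _)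

end Rotation

namespace DoubleRotation

variable {α β c : ℝ} {T : ℝ → ℝ}

def IsDoubleRotation (α β c : ℝ) (T : ℝ → ℝ) : Prop :=
  ∀ y ∈ Ico (0 : ℝ) 1, T y = if y < c then Int.fract (y + α) else Int.fract (y + β)

theorem mapsTo_Ico (hT : IsDoubleRotation α β c T) : MapsTo T (Ico 0 1) (Ico 0 1) := by
  intro y hy
  rw [hT y hy]
  split_ifs <;> exact ⟨Int.fract_nonneg _, Int.fract_lt_one _⟩

theorem eqOn_left (hT : IsDoubleRotation α β c T) (hc : c ≤ 1) :
    EqOn T (fun y => Int.fract (y + α)) (Ico 0 c) :=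
  fun y hy => by rw [hT y ⟨hy.1, hy.2.trans_le hc⟩, if_pos hy.2]

theorem eqOn_right (hT : IsDoubleRotation α β c T) (hc : 0 ≤ c) :
    EqOn T (fun y => Int.fract (y + β)) (Ico c 1) :=
  fun y hy => by rw [hT y ⟨hc.trans hy.1, hy.2⟩, if_neg (not_lt.mpr hy.1)]

theorem isFiniteUnionIco_image (hT : IsDoubleRotation α β c T) (hα : α ∈ Icc (0 : ℝ) 1)
    (hβ : β ∈ Icc (0 : ℝ) 1) (hc : c ∈ Icc (0 : ℝ) 1) {S : Set ℝ}
    (hS : S ⊆ Ico 0 1) (h : IsFiniteUnionIco S) : IsFiniteUnionIco (T '' S) := by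
  rw [← inter_Ico_union_inter_Ico hS hc.1 hc.2, image_union,
    ((eqOn_left hT hc.2).mono inter_subset_right).image_eq,
    ((eqOn_right hT hc.1).mono inter_subset_right).image_eq]
  exact ((h.inter_Ico 0 c).image_fract_add hα fun _ hx => hS hx.1).union
    ((h.inter_Ico c 1).image_fract_add hβ fun _ hx => hS hx.1)

theorem isFiniteUnionIco_image_iterate (hT : IsDoubleRotation α β c T)
    (hα : α ∈ Icc (0 : ℝ) 1) (hβ : β ∈ Icc (0 : ℝ) 1) (hc : c ∈ Icc (0 : ℝ) 1)
    (n : ℕ) :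
    IsFiniteUnionIco (T^[n] '' Ico 0 1) := by
  induction n with
  | zero => simpa using isFiniteUnionIco_Ico 0 1
  | succ n ih =>
    rw [iterate_succ', image_comp]
    exact isFiniteUnionIco_image hT hα hβ hc ((mapsTo_Ico hT).iterate n).image_subset ih

theorem bijOn_of_image_eq (hT : IsDoubleRotation α β c T) (hα : α ∈ Icc (0 : ℝ) 1)
    (hβ : β ∈ Icc (0 : ℝ) 1) (hc : c ∈ Icc (0 : ℝ) 1) {S : Set ℝ} (hS : S ⊆ Ico 0 1)
    (hSU : IsFiniteUnionIco S) (hTS : T '' S = S) : BijOn T S S := by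
  set L := S ∩ Ico 0 c
  set R := S ∩ Ico c 1
  have hLR : L ∪ R = S := inter_Ico_union_inter_Ico hS hc.1 hc.2
  have hdisj : Disjoint L R := disjoint_left.mpr fun _ hl hr => not_lt.mpr hr.2.1 hl.2.2
  have hLI : L ⊆ Ico 0 1 := inter_subset_left.trans hS
  have hRI : R ⊆ Ico 0 1 := inter_subset_left.trans hS
  have hTL : EqOn T (fun y => Int.fract (y + α)) L :=
    (eqOn_left hT hc.2).mono inter_subset_right
  have hTR : EqOn T (fun y => Int.fract (y + β)) R :=
    (eqOn_right hT hc.1).mono inter_subset_right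
  have hL : IsFiniteUnionIco L := hSU.inter_Ico 0 c
  have hR : IsFiniteUnionIco R := hSU.inter_Ico c 1
  have hTLR : IsFiniteUnionIco (T '' L ∩ T '' R) := by
    rw [hTL.image_eq, hTR.image_eq]
    exact (hL.image_fract_add hα hLI).inter (hR.image_fract_add hβ hRI)
  have hnull : volume (T '' L ∩ T '' R) = 0 := by
    refine measure_image_inter_image_eq_zero (μ := volume) hdisj hR.measurableSet
      ?_ ?_ ?_ ?_ ?_
    · rw [hTR.image_eq]
      exact (hR.image_fract_add hβ hRI).measurableSet
    · rw [hTL.image_eq]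
      exact volume_image_fract_add hα hLI hL.measurableSet
    · rw [hTR.image_eq]
      exact volume_image_fract_add hβ hRI hR.measurableSet
    · rw [hLR, hTS]
    · exact ((measure_mono (hLR.trans_subset hS)).trans_lt (by simp)).ne
  have hempty : T '' L ∩ T '' R = ∅ := hTLR.eq_empty_of_volume_eq_zero hnull
  refine ⟨mapsTo_iff_image_subset.mpr hTS.subset, ?_, hTS.symm.subset⟩
  rw [← hLR, injOn_union hdisj]
  refine ⟨((injOn_fract_add α).mono hLI).congr hTL.symm,
    ((injOn_fract_add β).mono hRI).congr hTR.symm, fun x hx y hy hxy => ?_⟩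
  exact eq_empty_iff_forall_notMem.mp hempty (T x)
    ⟨mem_image_of_mem T hx, hxy ▸ mem_image_of_mem T hy⟩

end DoubleRotation

open DoubleRotation in
/-- If a double rotation `T` is of finite type, i.e. `Ω N = Ω (N+1)` for some
`N`, then the attractor `Ω = ⋂_n Ω n` equals `Ω N`, is a nonempty finite union
of half-open intervals, and `T` restricted to it maps it bijectively onto
itself. -/
theorem double_rotation_finite_type_attractor
    (α β c : ℝ) (hα : α ∈ Set.Ico (0:ℝ) 1) (hβ : β ∈ Set.Ico (0:ℝ) 1)
    (hc : c ∈ Set.Ico (0:ℝ) 1)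
    (T : ℝ → ℝ)
    (hT : ∀ y ∈ Set.Ico (0:ℝ) 1,
      T y = if y < c then Int.fract (y + α) else Int.fract (y + β))
    (Ω : ℕ → Set ℝ)
    (hΩ : ∀ n, Ω n = ⋂ k ∈ Finset.range (n + 1), T^[k] '' Set.Ico (0:ℝ) 1)
    (N : ℕ) (hN : Ω N = Ω (N + 1)) :
    (⋂ n : ℕ, Ω n) = Ω N ∧
      (Ω N).Nonempty ∧
      (∃ s : Finset (ℝ × ℝ), Ω N = ⋃ p ∈ s, Set.Ico p.1 p.2) ∧
      Set.BijOn T (Ω N) (Ω N) := by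
  replace hα := Ico_subset_Icc_self hα
  replace hβ := Ico_subset_Icc_self hβ
  replace hc := Ico_subset_Icc_self hc
  have hmaps : MapsTo T (Ico 0 1) (Ico 0 1) := mapsTo_Ico hT
  have hΩ_eq : ∀ n, Ω n = T^[n] '' Ico 0 1 :=
    fun n => (hΩ n).trans (hmaps.biInter_range_succ_image_iterate n)
  have hfix : IsFixedPt (image T) (T^[N] '' Ico 0 1) := by
    rw [IsFixedPt, ← image_comp, ← iterate_succ', ← hΩ_eq, ← hΩ_eq]
    exact hN.symm
  have hU := isFiniteUnionIco_image_iterate hT hα hβ hc N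
  simp only [hΩ_eq]
  exact ⟨hmaps.iInter_image_iterate_eq hfix, (nonempty_Ico.mpr one_pos).image _, hU,
    bijOn_of_image_eq hT hα hβ hc (hmaps.iterate N).image_subset hU hfix⟩
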